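/- arXiv:1503.01746 — 2 statements merged into one kernel-verified Lean document; each statement's English description precedes it below -/
import Mathlib

section
/- Let f, g : [a,b] → ℝ, let c > 0 and let ε ∈ (0, c/2) satisfy sup_{t ∈ [a,b]} |f(t) − g(t)| ≤ ε. Then for every y ∈ ℝ, u_{c+2ε}^{y−ε}(g,[a,b]) ≤ u_c^y(f,[a,b]). -/
open MeasureTheory Filter Set
open scoped ENNReal NNReal

noncomputable section

/-- The truncated variation `TTV^c(f,[a,b])`. -/
def TTV (f : ℝ → ℝ) (a b c : ℝ) : ℝ≥0∞ :=
  ⨆ (n : ℕ) (t : Fin (n + 1) → ℝ) (_ : StrictMono t) (_ : ∀ i, t i ∈ Set.Icc a b),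
    ∑ i : Fin n, ENNReal.ofReal (|f (t i.succ) - f (t i.castSucc)| - c)

/-- The upward truncated variation `UTV^c(f,[a,b])`. -/
def UTV (f : ℝ → ℝ) (a b c : ℝ) : ℝ≥0∞ :=
  ⨆ (n : ℕ) (t : Fin (n + 1) → ℝ) (_ : StrictMono t) (_ : ∀ i, t i ∈ Set.Icc a b),
    ∑ i : Fin n, ENNReal.ofReal (f (t i.succ) - f (t i.castSucc) - c)

/-- The downward truncated variation `DTV^c(f,[a,b])`. -/
def DTV (f : ℝ → ℝ) (a b c : ℝ) : ℝ≥0∞ :=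
  ⨆ (n : ℕ) (t : Fin (n + 1) → ℝ) (_ : StrictMono t) (_ : ∀ i, t i ∈ Set.Icc a b),
    ∑ i : Fin n, ENNReal.ofReal (f (t i.castSucc) - f (t i.succ) - c)

/-- The alternating sequence of hitting times used to count crossings: starting from `a`,
`crossingTimes f b p q a (n+1)` is the infimum (in `EReal`, so `inf ∅ = +∞`) of the times
`t ∈ (previous time, b]` at which `f t` satisfies `p` (for even `n`) or `q` (for odd `n`). -/
def crossingTimes (f : ℝ → ℝ) (b : ℝ) (p q : ℝ → Prop) (a : ℝ) : ℕ → EReal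
  | 0 => (a : EReal)
  | n + 1 =>
      sInf {x : EReal | ∃ t : ℝ, x = (t : EReal) ∧
        crossingTimes f b p q a n < (t : EReal) ∧ t ≤ b ∧
        (if n % 2 = 0 then p (f t) else q (f t))}

/-- `u_c^y(f,[a,b])`: the number of upcrossings by `f` of the segment `[y, y+c]` on `[a,b]`,
i.e. the largest `n` (possibly `∞`) such that `σ̃_n ≤ b`, where `σ̃₀ = a`,
`τ̃_n = inf{t ∈ (σ̃_n, b] : f t < y}` and `σ̃_{n+1} = inf{t ∈ (τ̃_n, b] : f t > y + c}`. -/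
def upcross (f : ℝ → ℝ) (a b c y : ℝ) : ℝ≥0∞ :=
  ⨆ (n : ℕ) (_ : crossingTimes f b (fun r => r < y) (fun r => y + c < r) a (2 * n) ≤ (b : EReal)),
    (n : ℝ≥0∞)

/-- `d_c^y(f,[a,b])`: the number of downcrossings by `f` of the segment `[y, y+c]` on `[a,b]`,
i.e. the largest `n` (possibly `∞`) such that `σ_n ≤ b`, where `σ₀ = a`,
`τ_n = inf{t ∈ (σ_n, b] : f t > y + c}` and `σ_{n+1} = inf{t ∈ (τ_n, b] : f t < y}`. -/
def downcross (f : ℝ → ℝ) (a b c y : ℝ) : ℝ≥0∞ :=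
  ⨆ (n : ℕ) (_ : crossingTimes f b (fun r => y + c < r) (fun r => r < y) a (2 * n) ≤ (b : EReal)),
    (n : ℝ≥0∞)

/-- A function is regulated on `[a,b]` if it has right limits on `[a,b)` and left limits
on `(a,b]`. -/
def Regulated (f : ℝ → ℝ) (a b : ℝ) : Prop :=
  (∀ t ∈ Set.Ico a b, ∃ L : ℝ, Tendsto f (nhdsWithin t (Set.Ioi t)) (nhds L)) ∧
  (∀ t ∈ Set.Ioc a b, ∃ L : ℝ, Tendsto f (nhdsWithin t (Set.Iio t)) (nhds L))

/-- A step function on `ℝ`: piecewise constant with respect to a finite partition of `ℝ`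
into intervals; equivalently, there is a finite set `s` such that the function is constant
on every interval avoiding `s`. -/
def IsStepFunction (g : ℝ → ℝ) : Prop :=
  ∃ s : Finset ℝ, ∀ x y : ℝ, x ≤ y → (∀ z ∈ Set.Icc x y, z ∉ s) → g x = g y

/-- A standard Brownian motion: continuous paths started at `0`, with independent increments,
the increment on `[s,t]` being centered Gaussian with variance `t - s`. -/
structure IsBrownianMotion {Ω : Type*} [MeasurableSpace Ω] (P : Measure Ω)
    (B : Ω → ℝ → ℝ) : Prop where
  isProb : IsProbabilityMeasure P
  cont : ∀ ω, ContinuousOn (B ω) (Set.Ici 0)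
  init : ∀ ω, B ω 0 = 0
  meas : ∀ t : ℝ, Measurable fun ω => B ω t
  indep : ∀ (n : ℕ) (t : Fin (n + 1) → ℝ), Monotone t → 0 ≤ t 0 →
    ProbabilityTheory.iIndepFun
      (fun i : Fin n => fun ω => B ω (t i.succ) - B ω (t i.castSucc)) P
  gauss : ∀ s t : ℝ, 0 ≤ s → s ≤ t →
    Measure.map (fun ω => B ω t - B ω s) P
      = ProbabilityTheory.gaussianReal 0 (Real.toNNReal (t - s))

/-- The exponential distribution with rate `v` (density `v * exp (-v*t)` on `[0,∞)`). -/
def expMeasure (v : ℝ) : Measure ℝ :=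
  volume.withDensity fun t => ENNReal.ofReal (if 0 ≤ t then v * Real.exp (-v * t) else 0)

end

/-! Whenever `g` lies below `y - ε` (resp. above `y + c + ε`), `f` lies below `y`
(resp. above `y + c`). Hence, by induction, each hitting time of `f` comes no later than the
corresponding hitting time of `g`, and every upcrossing completed by `g` is completed by `f`. -/

theorem le_crossingTimes (f : ℝ → ℝ) (b : ℝ) (p q : ℝ → Prop) (a : ℝ) (n : ℕ) :
    (a : EReal) ≤ crossingTimes f b p q a n := by
  induction n with
  | zero => exact le_rfl
  | succ n ih =>
    refine le_sInf ?_
    rintro _ ⟨t, rfl, ht, -⟩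
    exact (ih.trans_lt ht).le

theorem crossingTimes_le_of_imp {f g : ℝ → ℝ} {a b : ℝ} {p q p' q' : ℝ → Prop}
    (hp : ∀ t ∈ Set.Icc a b, p' (g t) → p (f t)) (hq : ∀ t ∈ Set.Icc a b, q' (g t) → q (f t))
    (n : ℕ) : crossingTimes f b p q a n ≤ crossingTimes g b p' q' a n := by
  induction n with
  | zero => exact le_rfl
  | succ n ih =>
    refine sInf_le_sInf ?_
    rintro _ ⟨t, rfl, ht, htb, hpq⟩
    have hta : a < t := EReal.coe_lt_coe_iff.mp ((le_crossingTimes g b p' q' a n).trans_lt ht)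
    refine ⟨t, rfl, ih.trans_lt ht, htb, ?_⟩
    split_ifs at hpq ⊢
    · exact hp t ⟨hta.le, htb⟩ hpq
    · exact hq t ⟨hta.le, htb⟩ hpq

theorem upcross_le_of_crossingTimes_le {f g : ℝ → ℝ} {a b c c' y y' : ℝ}
    (h : ∀ n, crossingTimes f b (· < y) (y + c < ·) a n ≤
      crossingTimes g b (· < y') (y' + c' < ·) a n) :
    upcross g a b c' y' ≤ upcross f a b c y :=
  iSup₂_le fun n hn => le_iSup₂_of_le n ((h _).trans hn) le_rfl

theorem upcross_ge_of_uniform_approx_general (a b c ε y : ℝ) (f g : ℝ → ℝ)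
    (happrox : ∀ t ∈ Set.Icc a b, |f t - g t| ≤ ε) :
    upcross g a b (c + 2 * ε) (y - ε) ≤ upcross f a b c y := by
  refine upcross_le_of_crossingTimes_le (crossingTimes_le_of_imp ?_ ?_)
  · intro t ht hgt
    linarith [(abs_le.mp (happrox t ht)).2]
  · intro t ht hgt
    linarith [(abs_le.mp (happrox t ht)).1]

/-- If `g` approximates `f` uniformly on `[a,b]` with accuracy `ε ∈ (0, c/2)`, then
`u_{c+2ε}^{y-ε}(g,[a,b]) ≤ u_c^y(f,[a,b])`. -/
theorem upcross_ge_of_uniform_approx (a b c ε y : ℝ) (f g : ℝ → ℝ) (hab : a < b)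
    (hc : 0 < c) (hε : 0 < ε) (hεc : ε < c / 2)
    (happrox : ∀ t ∈ Set.Icc a b, |f t - g t| ≤ ε) :
    upcross g a b (c + 2 * ε) (y - ε) ≤ upcross f a b c y :=
  upcross_ge_of_uniform_approx_general a b c ε y f g happrox
end

section
/- Let f : [a,b] → ℝ be a regulated function and c > 0. Then for every y ∈ ℝ the number of crossings of the segment [y, y+c] is finite: n_c^y(f,[a,b]) < +∞. -/
open MeasureTheory Filter Set
open scoped ENNReal NNReal

/-! The hitting times form a nondecreasing sequence; if it never left `[a, b]` it would converge
to some `T ∈ [a, b]`. If the limit is reached, two consecutive hits occur just to the right of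
`T`; otherwise two consecutive hits occur just to the left of `T`. Either way `f` takes values at
distance `≥ c` arbitrarily close to `T` on one side, contradicting the existence of that one-sided
limit. -/

open Topology

section OneSidedLimit

variable {α β : Type*} [TopologicalSpace α] [LinearOrder α] [OrderTopology α]
  [PseudoMetricSpace β] {f : α → β} {x : α} {L : β} {ε : ℝ}

theorem exists_Ioo_dist_lt_of_tendsto_nhdsGT [NoMaxOrder α] (hf : Tendsto f (𝓝[>] x) (𝓝 L))
    (hε : 0 < ε) : ∃ u > x, ∀ s ∈ Ioo x u, ∀ t ∈ Ioo x u, dist (f s) (f t) < ε := by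
  obtain ⟨u, hu, hsub⟩ :=
    mem_nhdsGT_iff_exists_Ioo_subset.mp (hf (Metric.ball_mem_nhds L (half_pos hε)))
  refine ⟨u, hu, fun s hs t ht => ?_⟩
  calc dist (f s) (f t) ≤ dist (f s) L + dist (f t) L := dist_triangle_right _ _ _
    _ < ε / 2 + ε / 2 := add_lt_add (hsub hs) (hsub ht)
    _ = ε := add_halves ε

theorem exists_Ioo_dist_lt_of_tendsto_nhdsLT [NoMinOrder α] (hf : Tendsto f (𝓝[<] x) (𝓝 L))
    (hε : 0 < ε) : ∃ u < x, ∀ s ∈ Ioo u x, ∀ t ∈ Ioo u x, dist (f s) (f t) < ε := by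
  obtain ⟨u, hu, hsub⟩ :=
    mem_nhdsLT_iff_exists_Ioo_subset.mp (hf (Metric.ball_mem_nhds L (half_pos hε)))
  refine ⟨u, hu, fun s hs t ht => ?_⟩
  calc dist (f s) (f t) ≤ dist (f s) L + dist (f t) L := dist_triangle_right _ _ _
    _ < ε / 2 + ε / 2 := add_lt_add (hsub hs) (hsub ht)
    _ = ε := add_halves ε

end OneSidedLimit

section CrossingTimes

variable {f : ℝ → ℝ} {a b c : ℝ} {p q : ℝ → Prop}

theorem crossingTimes_monotone : Monotone (crossingTimes f b p q a) := by
  refine monotone_nat_of_le_succ fun n => le_sInf ?_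
  rintro x ⟨t, rfl, ht, -, -⟩
  exact ht.le

theorem exists_hit_of_crossingTimes_succ_lt {n : ℕ} {u : EReal}
    (hu : crossingTimes f b p q a (n + 1) < u) :
    ∃ t : ℝ, crossingTimes f b p q a n < t ∧ (t : EReal) < u ∧ t ≤ b ∧
      (if n % 2 = 0 then p (f t) else q (f t)) := by
  obtain ⟨_, ⟨t, rfl, hnt, htb, hpq⟩, htu⟩ := sInf_lt_iff.mp hu
  exact ⟨t, hnt, htu, htb, hpq⟩

theorem le_abs_sub_of_alternating (sep : ∀ r₁ r₂, p r₁ → q r₂ → c ≤ |r₁ - r₂|) {n : ℕ}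
    {r₁ r₂ : ℝ} (h₁ : if n % 2 = 0 then p r₁ else q r₁)
    (h₂ : if (n + 1) % 2 = 0 then p r₂ else q r₂) : c ≤ |r₁ - r₂| := by
  rcases Nat.mod_two_eq_zero_or_one n with hn | hn
  · have hn' : (n + 1) % 2 ≠ 0 := by omega
    rw [if_pos hn] at h₁
    rw [if_neg hn'] at h₂
    exact sep _ _ h₁ h₂
  · have hn' : (n + 1) % 2 = 0 := by omega
    rw [if_neg (by omega)] at h₁
    rw [if_pos hn'] at h₂
    exact abs_sub_comm r₁ r₂ ▸ sep _ _ h₂ h₁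

theorem exists_far_apart_hits (sep : ∀ r₁ r₂, p r₁ → q r₂ → c ≤ |r₁ - r₂|) (n : ℕ)
    {u : EReal} (hu : crossingTimes f b p q a (n + 2) < u) :
    ∃ t₁ t₂ : ℝ, crossingTimes f b p q a n < t₁ ∧ (t₁ : EReal) < u ∧
      crossingTimes f b p q a n < t₂ ∧ (t₂ : EReal) < u ∧ c ≤ |f t₁ - f t₂| := by
  obtain ⟨t₁, hnt₁, ht₁u, -, h₁⟩ :=
    exists_hit_of_crossingTimes_succ_lt
      ((crossingTimes_monotone (Nat.le_succ (n + 1))).trans_lt hu)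
  obtain ⟨t₂, hnt₂, ht₂u, -, h₂⟩ := exists_hit_of_crossingTimes_succ_lt hu
  exact ⟨t₁, t₂, hnt₁, ht₁u, (crossingTimes_monotone (Nat.le_succ n)).trans_lt hnt₂, ht₂u,
    le_abs_sub_of_alternating sep h₁ h₂⟩

theorem crossingTimes_lt_add_two (hf : ∀ t ∈ Ico a b, ∃ L, Tendsto f (𝓝[>] t) (𝓝 L))
    (hc : 0 < c) (sep : ∀ r₁ r₂, p r₁ → q r₂ → c ≤ |r₁ - r₂|) {N : ℕ}
    (hN : crossingTimes f b p q a N ≤ b) :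
    crossingTimes f b p q a N < crossingTimes f b p q a (N + 2) := by
  refine (crossingTimes_monotone (by omega : N ≤ N + 2)).lt_of_ne fun hstat => ?_
  have haN : (a : EReal) ≤ crossingTimes f b p q a N :=
    crossingTimes_monotone (Nat.zero_le N)
  obtain ⟨T, hT⟩ : ∃ T : ℝ, crossingTimes f b p q a N = T :=
    ⟨_, (EReal.coe_toReal (hN.trans_lt (EReal.coe_lt_top b)).ne
      ((EReal.bot_lt_coe a).trans_le haN).ne').symm⟩
  have hsucc : crossingTimes f b p q a (N + 1) < ⊤ :=
    (crossingTimes_monotone (Nat.le_succ (N + 1))).trans_lt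
      (hstat ▸ hT ▸ EReal.coe_lt_top T)
  obtain ⟨t, hTt, -, htb, -⟩ := exists_hit_of_crossingTimes_succ_lt hsucc
  rw [hT] at hTt haN
  have hTb : T < b := (EReal.coe_lt_coe_iff.mp hTt).trans_le htb
  obtain ⟨L, hL⟩ := hf T ⟨EReal.coe_le_coe_iff.mp haN, hTb⟩
  obtain ⟨u, hTu, hosc⟩ := exists_Ioo_dist_lt_of_tendsto_nhdsGT hL hc
  obtain ⟨t₁, t₂, hT₁, h₁u, hT₂, h₂u, hfar⟩ :=
    exists_far_apart_hits sep N (u := u) (by rw [← hstat, hT]; exact_mod_cast hTu)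
  rw [hT] at hT₁ hT₂
  norm_cast at hT₁ h₁u hT₂ h₂u
  exact (hosc t₁ ⟨hT₁, h₁u⟩ t₂ ⟨hT₂, h₂u⟩).not_ge hfar

theorem exists_crossingTimes_eq_iSup (hf : ∀ t ∈ Ioc a b, ∃ L, Tendsto f (𝓝[<] t) (𝓝 L))
    (hc : 0 < c) (sep : ∀ r₁ r₂, p r₁ → q r₂ → c ≤ |r₁ - r₂|)
    (hb : ⨆ n, crossingTimes f b p q a n ≤ b) :
    ∃ N, crossingTimes f b p q a N = ⨆ n, crossingTimes f b p q a n := by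
  by_contra! hne
  have hlt : ∀ n, crossingTimes f b p q a n < ⨆ n, crossingTimes f b p q a n :=
    fun n => (le_iSup _ n).lt_of_ne (hne n)
  obtain ⟨T, hT⟩ : ∃ T : ℝ, ⨆ n, crossingTimes f b p q a n = T :=
    ⟨_, (EReal.coe_toReal (hb.trans_lt (EReal.coe_lt_top b)).ne
      ((EReal.bot_lt_coe a).trans (hlt 0)).ne').symm⟩
  rw [hT] at hlt hb
  have haT : (a : EReal) < T := hlt 0
  obtain ⟨L, hL⟩ := hf T ⟨EReal.coe_lt_coe_iff.mp haT, EReal.coe_le_coe_iff.mp hb⟩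
  obtain ⟨u, huT, hosc⟩ := exists_Ioo_dist_lt_of_tendsto_nhdsLT hL hc
  obtain ⟨N, huN⟩ := lt_iSup_iff.mp (hT ▸ EReal.coe_lt_coe_iff.mpr huT)
  obtain ⟨t₁, t₂, hN₁, h₁T, hN₂, h₂T, hfar⟩ := exists_far_apart_hits sep N (hlt (N + 2))
  have hu₁ : (u : EReal) < t₁ := huN.trans hN₁
  have hu₂ : (u : EReal) < t₂ := huN.trans hN₂
  norm_cast at hu₁ h₁T hu₂ h₂T
  exact (hosc t₁ ⟨hu₁, h₁T⟩ t₂ ⟨hu₂, h₂T⟩).not_ge hfar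

theorem exists_crossingTimes_gt_of_regulated (hf : Regulated f a b) (hc : 0 < c)
    (sep : ∀ r₁ r₂, p r₁ → q r₂ → c ≤ |r₁ - r₂|) :
    ∃ N, (b : EReal) < crossingTimes f b p q a N := by
  by_contra! hb
  obtain ⟨N, hN⟩ := exists_crossingTimes_eq_iSup hf.2 hc sep (iSup_le hb)
  exact (crossingTimes_lt_add_two hf.1 hc sep (hb N)).not_ge (hN ▸ le_iSup _ (N + 2))

theorem iSup_crossingCount_lt_top {N : ℕ} (hN : (b : EReal) < crossingTimes f b p q a N) :
    ⨆ (n : ℕ) (_ : crossingTimes f b p q a (2 * n) ≤ b), (n : ℝ≥0∞) < ⊤ := by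
  refine (iSup₂_le fun n hn => ?_ : _ ≤ (N : ℝ≥0∞)).trans_lt (ENNReal.natCast_lt_top N)
  have h2n : 2 * n < N :=
    lt_of_not_ge fun h => (hn.trans_lt hN).not_ge (crossingTimes_monotone h)
  exact_mod_cast (by omega : n ≤ N)

end CrossingTimes

theorem downcross_lt_top {f : ℝ → ℝ} {a b c : ℝ} (hf : Regulated f a b) (hc : 0 < c)
    (y : ℝ) :
    downcross f a b c y < ⊤ := by
  obtain ⟨N, hN⟩ := exists_crossingTimes_gt_of_regulated (p := fun r => y + c < r)
    (q := fun r => r < y) hf hc fun r₁ r₂ h₁ h₂ => le_abs.mpr (Or.inl (by linarith))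
  exact iSup_crossingCount_lt_top hN

theorem upcross_lt_top {f : ℝ → ℝ} {a b c : ℝ} (hf : Regulated f a b) (hc : 0 < c)
    (y : ℝ) :
    upcross f a b c y < ⊤ := by
  obtain ⟨N, hN⟩ := exists_crossingTimes_gt_of_regulated (p := fun r => r < y)
    (q := fun r => y + c < r) hf hc fun r₁ r₂ h₁ h₂ => le_abs.mpr (Or.inr (by linarith))
  exact iSup_crossingCount_lt_top hN

theorem crossings_finite_general (a b c : ℝ) (f : ℝ → ℝ)
    (hf : Regulated f a b) (hc : 0 < c) :
    ∀ y : ℝ, downcross f a b c y + upcross f a b c y < ⊤ := fun y =>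
  ENNReal.add_lt_top.mpr ⟨downcross_lt_top hf hc y, upcross_lt_top hf hc y⟩

/-- For a regulated `f : [a,b] → ℝ` and `c > 0`, the number of crossings of the segment
`[y, y+c]` is finite for every `y ∈ ℝ`. -/
theorem crossings_finite (a b c : ℝ) (f : ℝ → ℝ) (hab : a < b)
    (hf : Regulated f a b) (hc : 0 < c) :
    ∀ y : ℝ, downcross f a b c y + upcross f a b c y < ⊤ :=
  crossings_finite_general a b c f hf hc
end
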